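/- arXiv:1607.05337 — 5 statements merged into one kernel-verified Lean document; each statement's English description precedes it below -/
import Mathlib

section
/- Let C ⊂ V be a proper closed convex full-dimensional cone, s > 1, and let f ∈ HConc_s(C), i.e., f : C → ℝ is upper semicontinuous, homogeneous of weight s, strictly positive on C°, and satisfies f(v+x)^{1/s} ≥ f(v)^{1/s} + f(x)^{1/s} for all v, x ∈ C. Then the double polar transform satisfies H(Hf) = f on C, where H is the polar transform (with exponent s on C and exponent s/(s-1) on C*). -/
/-!
Put `g = f ^ (1/s)`: it is `1`-homogeneous, superadditive and upper semicontinuous on `C`, and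
both transforms factor through the weight-one polar `N w = inf_{v ∈ C°} w v / g v`, namely
`Hf = N ^ (s/(s-1))` and `H(Hf) v = (inf_{w ∈ (C*)°} w v / N w) ^ s`. So it suffices to show that
the last infimum is `g v`. Superadditivity gives `N w * g v ≤ w v` on all of `C`, hence `≥`.
Conversely, the hypograph of `g` is a closed convex cone, so Farkas' lemma yields, for every
`τ > g v`, a linear majorant `u ≥ g` on `C` with `u v < τ`. Since `C` is salient, `C*` has
interior; nudging `u` into it keeps `N ≥ 1`, so the infimum is at most `g v + η` for every `η > 0`.
-/

open Set Topology

variable {V : Type*} [NormedAddCommGroup V] [NormedSpace ℝ V] [FiniteDimensional ℝ V]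

/-- The dual cone of `C` inside the continuous dual of `V`. -/
def dualCone (C : Set V) : Set (V →L[ℝ] ℝ) := {w | ∀ v ∈ C, 0 ≤ w v}

/-- The polar transform of a weight-`s` homogeneous function `f` on the cone `C`. -/
noncomputable def polar (C : Set V) (s : ℝ) (f : V → ℝ) (w : V →L[ℝ] ℝ) : ℝ :=
  sInf ((fun v => (w v / f v ^ (1/s)) ^ (s/(s-1))) '' interior C)

/-- The polar transform of a function on the dual cone, yielding a function on `V`. -/
noncomputable def polar2 (C : Set V) (s : ℝ) (g : (V →L[ℝ] ℝ) → ℝ) (v : V) : ℝ :=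
  sInf ((fun w : V →L[ℝ] ℝ => (w v / g w ^ ((s-1)/s)) ^ s) '' interior (dualCone C))

theorem sInf_image_rpow {S : Set ℝ} (hS : S.Nonempty) (hS0 : ∀ x ∈ S, 0 ≤ x) {p : ℝ}
    (hp : 0 ≤ p) : sInf ((· ^ p) '' S) = sInf S ^ p := by
  -- `x ↦ x ^ p` is monotone only on `[0, ∞)`, so clamp it there.
  let Φ : ℝ → ℝ := fun x => max x 0 ^ p
  have hΦ_mono : Monotone Φ := fun a b hab =>
    Real.rpow_le_rpow (le_max_right a 0) (max_le_max hab le_rfl) hp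
  have hΦ_cont : Continuous Φ :=
    (continuous_id.max continuous_const).rpow_const fun _ => Or.inr hp
  have hΦS : Φ '' S = (· ^ p) '' S := image_congr fun x hx => by simp [Φ, max_eq_left (hS0 x hx)]
  rw [← hΦS, ← hΦ_mono.map_csInf_of_continuousAt hΦ_cont.continuousAt hS ⟨0, hS0⟩]
  exact congrArg (· ^ p) (max_eq_left (le_csInf hS hS0))

theorem UpperSemicontinuousOn.rpow_const {α : Type*} [TopologicalSpace α] {f : α → ℝ} {s : Set α}
    (hf : UpperSemicontinuousOn f s) (hf0 : ∀ x ∈ s, 0 ≤ f x) {p : ℝ} (hp : 0 ≤ p) :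
    UpperSemicontinuousOn (fun x => f x ^ p) s := by
  have hΨ : UpperSemicontinuousOn ((fun y => max y 0 ^ p) ∘ f) s :=
    ((continuous_id.max continuous_const).rpow_const fun _ => Or.inr hp).comp_upperSemicontinuousOn
      hf fun a b hab => Real.rpow_le_rpow (le_max_right a 0) (max_le_max hab le_rfl) hp
  refine fun x hx => (hΨ x hx).congr_of_eventuallyEq hx ?_
  filter_upwards [self_mem_nhdsWithin] with y hy
  simp [max_eq_left (hf0 y hy)]

theorem exists_pos_sub_smul_mem {F : Type*} [AddCommGroup F] [Module ℝ F] [TopologicalSpace F]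
    [IsTopologicalAddGroup F] [ContinuousSMul ℝ F] {S : Set F} {w : F} (hw : w ∈ interior S)
    (u : F) : ∃ δ : ℝ, 0 < δ ∧ w - δ • u ∈ S := by
  have hS : ∀ᶠ δ in 𝓝 (0 : ℝ), w - δ • u ∈ S :=
    (show Continuous fun δ : ℝ => w - δ • u by fun_prop).continuousAt.preimage_mem_nhds
      (by simpa using mem_interior_iff_mem_nhds.1 hw)
  obtain ⟨δ, hδS, hδ⟩ := ((hS.filter_mono nhdsWithin_le_nhds).and
    (self_mem_nhdsWithin : Ioi (0 : ℝ) ∈ 𝓝[>] 0)).exists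
  exact ⟨δ, hδ, hδS⟩

section Cones
variable {E : Type*} [NormedAddCommGroup E] [NormedSpace ℝ E]

theorem add_mem_of_convex_of_smul_mem {K : Set E} (hKcv : Convex ℝ K)
    (hKcone : ∀ x ∈ K, ∀ t : ℝ, 0 ≤ t → t • x ∈ K) {x y : E} (hx : x ∈ K) (hy : y ∈ K) :
    x + y ∈ K := by
  have h := hKcone _ (hKcv hx hy (by norm_num : (0 : ℝ) ≤ 1 / 2) (by norm_num : (0 : ℝ) ≤ 1 / 2)
    (by norm_num)) 2 (by norm_num)
  rwa [smul_add, smul_smul, smul_smul, show (2 : ℝ) * (1 / 2) = 1 by norm_num, one_smul,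
    one_smul] at h

noncomputable def toProperCone (K : Set E) (hKcl : IsClosed K) (hKcv : Convex ℝ K)
    (hKcone : ∀ x ∈ K, ∀ t : ℝ, 0 ≤ t → t • x ∈ K) (hK0 : (0 : E) ∈ K) : ProperCone ℝ E where
  carrier := K
  add_mem' := add_mem_of_convex_of_smul_mem hKcv hKcone
  zero_mem' := hK0
  smul_mem' c _ hx := hKcone _ hx c c.2
  isClosed' := hKcl

namespace ProperCone
variable (K : ProperCone ℝ E)

theorem add_mem_interior {x y : E} (hx : x ∈ interior (K : Set E)) (hy : y ∈ K) :
    x + y ∈ interior (K : Set E) :=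
  interior_mono (add_subset_iff.2 fun _ ha _ hb => K.add_mem ha hb)
    (subset_interior_add_left (add_mem_add hx hy))

theorem smul_mem_interior {t : ℝ} (ht : 0 < t) {x : E} (hx : x ∈ interior (K : Set E)) :
    t • x ∈ interior (K : Set E) := by
  refine interior_mono ?_ ((interior_smul₀ ht.ne' (K : Set E)).symm ▸ smul_mem_smul_set hx)
  rintro _ ⟨y, hy, rfl⟩
  exact K.smul_mem hy ht.le

end ProperCone

end Cones

noncomputable def dualProperCone (C : Set V) : ProperCone ℝ (V →L[ℝ] ℝ) :=
  ProperCone.dual (topDualPairing ℝ V).flip C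

theorem coe_dualProperCone (C : Set V) :
    (dualProperCone C : Set (V →L[ℝ] ℝ)) = dualCone C := rfl

theorem mem_of_forall_mem_dualCone_nonneg (C : ProperCone ℝ V) {v : V}
    (hv : ∀ w ∈ dualCone (C : Set V), 0 ≤ w v) : v ∈ C := by
  rw [← ProperCone.dual_flip_dual (topDualPairing ℝ V).flip C]
  exact fun w hw => hv w hw

theorem span_dualCone_eq_top (C : ProperCone ℝ V) (hCsal : ∀ v ∈ C, -v ∈ C → v = 0) :
    Submodule.span ℝ (dualCone (C : Set V)) = ⊤ := by
  by_contra hne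
  obtain ⟨ψ, hψ0, hψ⟩ :=
    Submodule.exists_dual_map_eq_bot_of_lt_top (lt_top_iff_ne_top.2 hne) inferInstance
  -- In finite dimension every functional on the dual space is evaluation at a vector.
  obtain ⟨v, hv⟩ := (topDualPairing ℝ V).flip.toContPerfPair.surjective
    (LinearMap.toContinuousLinearMap ψ)
  have hψv : ∀ w, ψ w = w v := fun w => by
    rw [← LinearMap.coe_toContinuousLinearMap' ψ, ← hv]; rfl
  have hvanish : ∀ w ∈ dualCone (C : Set V), w v = 0 := fun w hw => by
    rw [← hψv, ← Submodule.mem_bot ℝ, ← hψ]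
    exact Submodule.mem_map_of_mem (Submodule.subset_span hw)
  have hv0 : v = 0 := hCsal v (mem_of_forall_mem_dualCone_nonneg C fun w hw => (hvanish w hw).ge)
    (mem_of_forall_mem_dualCone_nonneg C fun w hw => by simp [hvanish w hw])
  exact hψ0 (LinearMap.ext fun w => by simp [hψv, hv0])

theorem interior_dualCone_nonempty (C : ProperCone ℝ V) (hCsal : ∀ v ∈ C, -v ∈ C → v = 0) :
    (interior (dualCone (C : Set V))).Nonempty := by
  have h0 : (0 : V →L[ℝ] ℝ) ∈ dualCone (C : Set V) := fun _ _ => le_rfl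
  rw [← coe_dualProperCone, (dualProperCone _).convex.interior_nonempty_iff_affineSpan_eq_top,
    coe_dualProperCone, AffineSubspace.affineSpan_eq_top_iff_vectorSpan_eq_top_of_nonempty ℝ _ _
      ⟨0, h0⟩, vectorSpan_eq_span_vsub_set_right ℝ h0]
  simpa using span_dualCone_eq_top C hCsal

/-- The class `HConc_1(C)` of the paper. -/
structure IsHomConcave {E : Type*} [NormedAddCommGroup E] [NormedSpace ℝ E] (C : Set E)
    (g : E → ℝ) : Prop where
  nonneg : ∀ v ∈ C, 0 ≤ g v
  map_smul : ∀ t : ℝ, 0 ≤ t → ∀ v ∈ C, g (t • v) = t * g v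
  superadditive : ∀ v ∈ C, ∀ x ∈ C, g v + g x ≤ g (v + x)
  pos : ∀ v ∈ interior C, 0 < g v
  usc : UpperSemicontinuousOn g C

theorem isHomConcave_rpow_one_div {E : Type*} [NormedAddCommGroup E] [NormedSpace ℝ E]
    {C : Set E} {s : ℝ} (hs : 0 < s) {f : E → ℝ} (hfusc : UpperSemicontinuousOn f C)
    (hf0 : ∀ v ∈ C, 0 ≤ f v) (hfhom : ∀ t : ℝ, 0 ≤ t → ∀ v ∈ C, f (t • v) = t ^ s * f v)
    (hfpos : ∀ v ∈ interior C, 0 < f v)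
    (hfconc : ∀ v ∈ C, ∀ x ∈ C, f v ^ (1 / s) + f x ^ (1 / s) ≤ f (v + x) ^ (1 / s)) :
    IsHomConcave C (fun v => f v ^ (1 / s)) where
  nonneg v hv := Real.rpow_nonneg (hf0 v hv) _
  map_smul t ht v hv := by
    rw [hfhom t ht v hv, Real.mul_rpow (Real.rpow_nonneg ht s) (hf0 v hv), one_div,
      Real.rpow_rpow_inv ht hs.ne']
  superadditive := hfconc
  pos v hv := Real.rpow_pos_of_pos (hfpos v hv) _
  usc := hfusc.rpow_const hf0 (by positivity)

noncomputable def polarGauge {E : Type*} [NormedAddCommGroup E] [NormedSpace ℝ E] (C : Set E)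
    (g : E → ℝ) (w : E →L[ℝ] ℝ) : ℝ :=
  sInf ((fun v => w v / g v) '' interior C)

namespace IsHomConcave
variable {E : Type*} [NormedAddCommGroup E] [NormedSpace ℝ E] {C : ProperCone ℝ E} {g : E → ℝ}
  {w : E →L[ℝ] ℝ}

theorem convex_hypograph (hg : IsHomConcave (C : Set E) g) :
    Convex ℝ {p : E × ℝ | p.1 ∈ C ∧ p.2 ≤ g p.1} := by
  rintro ⟨x, τ⟩ ⟨hx, hτ⟩ ⟨y, σ⟩ ⟨hy, hσ⟩ a b ha hb hab
  refine ⟨C.convex hx hy ha hb hab, ?_⟩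
  calc a * τ + b * σ ≤ g (a • x) + g (b • y) := by
        rw [hg.map_smul a ha x hx, hg.map_smul b hb y hy]
        exact add_le_add (mul_le_mul_of_nonneg_left hτ ha) (mul_le_mul_of_nonneg_left hσ hb)
    _ ≤ g (a • x + b • y) := hg.superadditive _ (C.smul_mem hx ha) _ (C.smul_mem hy hb)

theorem smul_mem_hypograph (hg : IsHomConcave (C : Set E) g) :
    ∀ p ∈ {p : E × ℝ | p.1 ∈ C ∧ p.2 ≤ g p.1}, ∀ t : ℝ, 0 ≤ t →
      t • p ∈ {p : E × ℝ | p.1 ∈ C ∧ p.2 ≤ g p.1} := by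
  rintro ⟨x, τ⟩ ⟨hx, hτ⟩ t ht
  refine ⟨C.smul_mem hx ht, ?_⟩
  change t * τ ≤ g (t • x)
  rw [hg.map_smul t ht x hx]
  exact mul_le_mul_of_nonneg_left hτ ht

theorem exists_majorant_lt (hg : IsHomConcave (C : Set E) g) {v : E} (hv : v ∈ C) {τ : ℝ}
    (hτ : g v < τ) : ∃ u : E →L[ℝ] ℝ, (∀ x ∈ C, g x ≤ u x) ∧ u v < τ := by
  let K := toProperCone {p : E × ℝ | p.1 ∈ C ∧ p.2 ≤ g p.1}
    ((upperSemicontinuousOn_iff_isClosed_hypograph C.isClosed).1 hg.usc) hg.convex_hypograph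
    hg.smul_mem_hypograph ⟨C.zero_mem, hg.nonneg 0 C.zero_mem⟩
  obtain ⟨φ, hφK, hφv⟩ := K.hyperplane_separation_point (x₀ := (v, τ)) fun h => (not_le.2 hτ) h.2
  set a := φ.comp (ContinuousLinearMap.inl ℝ E ℝ)
  set b := φ (0, 1)
  have hφ : ∀ x t, φ (x, t) = a x + t * b := fun x t => by
    rw [show (x, t) = ContinuousLinearMap.inl ℝ E ℝ x + t • ((0 : E), (1 : ℝ)) by ext <;> simp,
      map_add, φ.map_smul, smul_eq_mul]
    rfl
  have hb : b < 0 := by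
    have h := hφK (v, g v) ⟨hv, le_rfl⟩
    rw [hφ] at h hφv
    nlinarith
  refine ⟨(-b)⁻¹ • a, fun x hx => ?_, ?_⟩
  · have h := hφK (x, g x) ⟨hx, le_rfl⟩
    rw [hφ] at h
    change g x ≤ (-b)⁻¹ * a x
    rw [← div_eq_inv_mul, le_div_iff₀ (by linarith)]
    linarith
  · rw [hφ] at hφv
    change (-b)⁻¹ * a v < τ
    rw [← div_eq_inv_mul, div_lt_iff₀ (by linarith)]
    linarith

theorem polarGauge_le (hg : IsHomConcave (C : Set E) g) (hw : w ∈ dualCone (C : Set E)) {v : E}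
    (hv : v ∈ interior (C : Set E)) : polarGauge C g w ≤ w v / g v := by
  refine csInf_le ⟨0, ?_⟩ ⟨v, hv, rfl⟩
  rintro _ ⟨x, hx, rfl⟩
  exact div_nonneg (hw x (interior_subset hx)) (hg.nonneg x (interior_subset hx))

theorem le_polarGauge (hg : IsHomConcave (C : Set E) g) (hCint : (interior (C : Set E)).Nonempty)
    {δ : ℝ} (h : ∀ x ∈ C, δ * g x ≤ w x) : δ ≤ polarGauge C g w := by
  refine le_csInf (hCint.image _) ?_
  rintro _ ⟨x, hx, rfl⟩
  exact (le_div_iff₀ (hg.pos x hx)).2 (h x (interior_subset hx))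

theorem polarGauge_nonneg (hg : IsHomConcave (C : Set E) g)
    (hCint : (interior (C : Set E)).Nonempty) (hw : w ∈ dualCone (C : Set E)) :
    0 ≤ polarGauge C g w :=
  hg.le_polarGauge hCint fun x hx => by simpa using hw x hx

theorem polarGauge_mul_le (hg : IsHomConcave (C : Set E) g)
    (hCint : (interior (C : Set E)).Nonempty) (hw : w ∈ dualCone (C : Set E)) {v : E} (hv : v ∈ C) :
    polarGauge C g w * g v ≤ w v := by
  obtain ⟨x₀, hx₀⟩ := hCint
  refine le_of_forall_pos_le_add fun δ hδ => ?_
  obtain ⟨ε, hε, hεδ⟩ := exists_pos_mul_lt hδ (w x₀)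
  -- `v` may lie on the boundary; superadditivity lets us replace it by `v + ε • x₀ ∈ C°`.
  have hεx₀ : ε • x₀ ∈ C := C.smul_mem (interior_subset hx₀) hε.le
  have hvε : v + ε • x₀ ∈ interior (C : Set E) := by
    rw [add_comm]
    exact C.add_mem_interior (C.smul_mem_interior hε hx₀) hv
  have hgvε : g v ≤ g (v + ε • x₀) := by
    linarith [hg.superadditive v hv _ hεx₀, hg.nonneg _ hεx₀]
  calc polarGauge C g w * g v ≤ polarGauge C g w * g (v + ε • x₀) :=
        mul_le_mul_of_nonneg_left hgvε (hg.polarGauge_nonneg ⟨x₀, hx₀⟩ hw)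
    _ ≤ w (v + ε • x₀) := (le_div_iff₀ (hg.pos _ hvε)).1 (hg.polarGauge_le hw hvε)
    _ = w v + w x₀ * ε := by rw [map_add, w.map_smul, smul_eq_mul, mul_comm]
    _ ≤ w v + δ := by linarith

theorem polarGauge_pos (hg : IsHomConcave (C : Set E) g) (hCint : (interior (C : Set E)).Nonempty)
    (hw : w ∈ interior (dualCone (C : Set E))) : 0 < polarGauge C g w := by
  obtain ⟨u, hu, -⟩ := hg.exists_majorant_lt C.zero_mem (lt_add_one (g 0))
  obtain ⟨δ, hδ, hwδ⟩ := exists_pos_sub_smul_mem hw u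
  refine hδ.trans_le (hg.le_polarGauge hCint fun x hx => ?_)
  have h := hwδ x hx
  simp only [sub_apply, smul_apply, smul_eq_mul, sub_nonneg] at h
  nlinarith [hu x hx]

theorem exists_one_le_polarGauge [FiniteDimensional ℝ E] (hg : IsHomConcave (C : Set E) g)
    (hCint : (interior (C : Set E)).Nonempty) (hCsal : ∀ v ∈ C, -v ∈ C → v = 0) {v : E}
    (hv : v ∈ C) {η : ℝ} (hη : 0 < η) :
    ∃ w ∈ interior (dualCone (C : Set E)), 1 ≤ polarGauge C g w ∧ w v ≤ g v + η := by
  obtain ⟨u, hu, huv⟩ := hg.exists_majorant_lt hv (lt_add_of_pos_right (g v) (half_pos hη))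
  obtain ⟨w₀, hw₀⟩ := interior_dualCone_nonempty C hCsal
  obtain ⟨ε, hε, hεv⟩ := exists_pos_mul_lt (half_pos hη) (w₀ v)
  have hw₀C : ∀ x ∈ C, 0 ≤ ε * w₀ x := fun x hx => mul_nonneg hε.le (interior_subset hw₀ x hx)
  refine ⟨ε • w₀ + u, ?_, hg.le_polarGauge hCint fun x hx => ?_, ?_⟩
  · exact (dualProperCone _).add_mem_interior ((dualProperCone _).smul_mem_interior hε hw₀)
      fun x hx => (hg.nonneg x hx).trans (hu x hx)
  · simp only [one_mul, add_apply, smul_apply, smul_eq_mul]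
    linarith [hu x hx, hw₀C x hx]
  · simp only [add_apply, smul_apply, smul_eq_mul]
    linarith

theorem sInf_div_polarGauge [FiniteDimensional ℝ E] (hg : IsHomConcave (C : Set E) g)
    (hCint : (interior (C : Set E)).Nonempty) (hCsal : ∀ v ∈ C, -v ∈ C → v = 0) {v : E}
    (hv : v ∈ C) :
    sInf ((fun w => w v / polarGauge C g w) '' interior (dualCone (C : Set E))) = g v := by
  have hN : ∀ w ∈ interior (dualCone (C : Set E)), 0 < polarGauge C g w :=
    fun w hw => hg.polarGauge_pos hCint hw
  refine le_antisymm (le_of_forall_pos_le_add fun η hη => ?_)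
    (le_csInf ((interior_dualCone_nonempty C hCsal).image _) ?_)
  · obtain ⟨w, hw, h1, hwv⟩ := hg.exists_one_le_polarGauge hCint hCsal hv hη
    have hbdd : BddBelow ((fun w => w v / polarGauge C g w) ''
        interior (dualCone (C : Set E))) := by
      refine ⟨0, ?_⟩
      rintro _ ⟨w, hw, rfl⟩
      exact div_nonneg (interior_subset hw v hv) (hN w hw).le
    calc sInf _ ≤ w v / polarGauge C g w := csInf_le hbdd ⟨w, hw, rfl⟩
      _ ≤ w v := div_le_self (interior_subset hw v hv) h1
      _ ≤ g v + η := hwv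
  · rintro _ ⟨w, hw, rfl⟩
    rw [le_div_iff₀ (hN w hw), mul_comm]
    exact hg.polarGauge_mul_le hCint (interior_subset hw) hv

end IsHomConcave

theorem double_polar_eq
    (C : Set V) (hCcl : IsClosed C) (hCcv : Convex ℝ C)
    (hCcone : ∀ v ∈ C, ∀ t : ℝ, 0 ≤ t → t • v ∈ C)
    (hCproper : ∀ v ∈ C, -v ∈ C → v = 0)
    (hCfull : (interior C).Nonempty)
    (s : ℝ) (hs : 1 < s) (f : V → ℝ)
    (hfusc : UpperSemicontinuousOn f C)
    (hf0 : ∀ v ∈ C, 0 ≤ f v)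
    (hfhom : ∀ t : ℝ, 0 ≤ t → ∀ v ∈ C, f (t • v) = t ^ s * f v)
    (hfpos : ∀ v ∈ interior C, 0 < f v)
    (hfconc : ∀ v ∈ C, ∀ x ∈ C, f v ^ (1/s) + f x ^ (1/s) ≤ f (v + x) ^ (1/s)) :
    ∀ v ∈ C, polar2 C s (polar C s f) v = f v := by
  obtain ⟨C, rfl⟩ : ∃ K : ProperCone ℝ V, (K : Set V) = C :=
    ⟨toProperCone C hCcl hCcv hCcone
      (by simpa using hCcone _ (interior_subset hCfull.some_mem) 0 le_rfl), rfl⟩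
  have hs0 : 0 < s := by linarith
  set g : V → ℝ := fun v => f v ^ (1 / s)
  have hg : IsHomConcave (C : Set V) g :=
    isHomConcave_rpow_one_div hs0 hfusc hf0 hfhom hfpos hfconc
  have hpolar : ∀ w ∈ dualCone (C : Set V), polar C s f w ^ ((s - 1) / s) = polarGauge C g w := by
    intro w hw
    have h : polar C s f w = polarGauge C g w ^ (s / (s - 1)) := by
      rw [polar, polarGauge, ← sInf_image_rpow (hCfull.image _) ?_ (by positivity), image_image]
      rintro _ ⟨x, hx, rfl⟩
      exact div_nonneg (hw x (interior_subset hx)) (hg.nonneg x (interior_subset hx))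
    rw [h, ← inv_div, Real.rpow_inv_rpow (hg.polarGauge_nonneg hCfull hw) (by positivity)]
  intro v hv
  calc polar2 C s (polar C s f) v
      = sInf ((fun w => w v / polarGauge C g w) '' interior (dualCone (C : Set V))) ^ s := by
        rw [polar2, ← sInf_image_rpow ((interior_dualCone_nonempty C hCproper).image _) ?_ hs0.le,
          image_image]
        · exact congrArg sInf (image_congr fun w hw => by rw [hpolar w (interior_subset hw)])
        · rintro _ ⟨w, hw, rfl⟩
          exact div_nonneg (interior_subset hw v hv)
            (hg.polarGauge_nonneg hCfull (interior_subset hw))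
    _ = g v ^ s := by rw [hg.sInf_div_polarGauge hCfull hCproper hv]
    _ = f v := by rw [← Real.rpow_mul (hf0 v hv), one_div_mul_cancel hs0.ne', Real.rpow_one]
end

section
/- Let C ⊂ V be a proper closed convex full-dimensional cone, s > 1, f ∈ HConc_s(C), and α ∈ (0,1). Suppose f satisfies the sublinear boundary condition of order α: for every nonzero v on the boundary of C and every x ∈ C°, there is a constant C(v,x) > 0 such that f(v + εx)^{1/s} ≥ C(v,x) · ε^α for all small ε > 0. Then the polar transform Hf vanishes at every point of the boundary of C*, and consequently Hf extends to a continuous function on all of V* by setting it equal to 0 outside C*. -/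
open Set Topology

variable {V : Type*} [NormedAddCommGroup V] [NormedSpace ℝ V] [FiniteDimensional ℝ V]

open Filter

lemma aux_dualCone_closed (C : Set V) : IsClosed (dualCone C) := by
  have : dualCone C = ⋂ v ∈ C, {w : V →L[ℝ] ℝ | 0 ≤ w v} := by
    ext w; simp [dualCone]
  rw [this]
  exact isClosed_biInter fun v _ =>
    isClosed_le continuous_const (ContinuousLinearMap.apply ℝ ℝ v).continuous

lemma aux_dualCone_convex (C : Set V) : Convex ℝ (dualCone C) := by
  intro w1 h1 w2 h2 a b ha hb hab v hv
  have t1 := h1 v hv; have t2 := h2 v hv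
  simp only [ContinuousLinearMap.add_apply, ContinuousLinearMap.coe_smul', Pi.smul_apply,
    smul_eq_mul]
  positivity

lemma aux_add_mem {C : Set V} (hCcv : Convex ℝ C)
    (hCcone : ∀ v ∈ C, ∀ t : ℝ, 0 ≤ t → t • v ∈ C)
    {a b : V} (ha : a ∈ C) (hb : b ∈ C) : a + b ∈ C := by
  have h2 := hCcv ha hb (by norm_num : (0:ℝ) ≤ 1/2) (by norm_num : (0:ℝ) ≤ 1/2) (by norm_num)
  have := hCcone _ h2 2 (by norm_num)
  rw [smul_add, smul_smul, smul_smul] at this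
  norm_num at this
  exact this

lemma aux_add_interior {C : Set V} (hCcv : Convex ℝ C)
    (hCcone : ∀ v ∈ C, ∀ t : ℝ, 0 ≤ t → t • v ∈ C)
    {v u : V} (hv : v ∈ C) (hu : u ∈ interior C) : v + u ∈ interior C := by
  refine mem_interior.2 ⟨(fun z => v + z) '' interior C, ?_, ?_, ⟨u, hu, rfl⟩⟩
  · rintro _ ⟨z, hz, rfl⟩
    exact aux_add_mem hCcv hCcone hv (interior_subset hz)
  · exact (Homeomorph.addLeft v).isOpenMap _ isOpen_interior

lemma aux_smul_interior {C : Set V}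
    (hCcone : ∀ v ∈ C, ∀ t : ℝ, 0 ≤ t → t • v ∈ C)
    {t : ℝ} (ht : 0 < t) {u : V} (hu : u ∈ interior C) : t • u ∈ interior C := by
  refine mem_interior.2 ⟨(fun z => t • z) '' interior C, ?_, ?_, ⟨u, hu, rfl⟩⟩
  · rintro _ ⟨z, hz, rfl⟩
    exact hCcone _ (interior_subset hz) t ht.le
  · exact (Homeomorph.smulOfNeZero t ht.ne').isOpenMap _ isOpen_interior

lemma aux_frontier_dual {C : Set V} (hCcl : IsClosed C)
    (hCcone : ∀ v ∈ C, ∀ t : ℝ, 0 ≤ t → t • v ∈ C)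
    {w : V →L[ℝ] ℝ} (hwK : w ∈ dualCone C) (hwf : w ∉ interior (dualCone C)) :
    ∃ v₀ ∈ C, v₀ ≠ 0 ∧ w v₀ = 0 := by
  by_contra hcon
  push_neg at hcon
  have hpos : ∀ v ∈ C, v ≠ 0 → 0 < w v := fun v hv hv0 =>
    lt_of_le_of_ne (hwK v hv) (Ne.symm (hcon v hv hv0))
  apply hwf
  by_cases hC0 : ∃ v ∈ C, v ≠ 0
  · obtain ⟨v1, hv1, hv10⟩ := hC0
    set Kc := C ∩ Metric.sphere (0:V) 1 with hKcdef
    have hKc : IsCompact Kc := (isCompact_sphere 0 1).inter_left hCcl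
    have hnorm : ∀ v : V, v ∈ C → v ≠ 0 → ‖v‖⁻¹ • v ∈ Kc := by
      intro v hv hv0
      have hn : (0:ℝ) < ‖v‖ := norm_pos_iff.2 hv0
      refine ⟨hCcone v hv _ (by positivity), ?_⟩
      simp [norm_smul, abs_of_pos (inv_pos.2 hn), inv_mul_cancel₀ hn.ne']
    have hKcne : Kc.Nonempty := ⟨_, hnorm v1 hv1 hv10⟩
    obtain ⟨u0, hu0, hmin⟩ := hKc.exists_isMinOn hKcne w.continuous.continuousOn
    have hu00 : u0 ≠ 0 := by
      intro h; have := hu0.2; rw [h] at this; simp at this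
    have hδ : 0 < w u0 := hpos u0 hu0.1 hu00
    refine mem_interior.2 ⟨Metric.ball w (w u0), ?_, Metric.isOpen_ball,
      Metric.mem_ball_self hδ⟩
    intro w' hw' v hv
    rcases eq_or_ne v 0 with rfl | hv0
    · simp
    · have hn : (0:ℝ) < ‖v‖ := norm_pos_iff.2 hv0
      set u := ‖v‖⁻¹ • v with hu
      have huK : u ∈ Kc := hnorm v hv hv0
      have h1 : w u0 ≤ w u := hmin huK
      have h2 : |(w - w') u| ≤ ‖w - w'‖ := by
        have := (w - w').le_opNorm u
        rwa [mem_sphere_zero_iff_norm.1 huK.2, mul_one] at this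
      have h3 : ‖w - w'‖ < w u0 := by
        rw [← dist_eq_norm]
        rw [Metric.mem_ball, dist_comm] at hw'
        exact hw'
      have h4 : 0 ≤ w' u := by
        have : (w - w') u ≤ ‖w - w'‖ := (le_abs_self _).trans h2
        simp only [ContinuousLinearMap.sub_apply] at this
        linarith
      have h5 : v = ‖v‖ • u := by rw [hu, smul_smul, mul_inv_cancel₀ hn.ne', one_smul]
      rw [h5, map_smul, smul_eq_mul]
      positivity
  · push_neg at hC0
    have hKuniv : dualCone C = univ := eq_univ_of_forall fun w' v hv => by
      rw [hC0 v hv]; simp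
    rw [hKuniv]
    simp

theorem polar_vanishes_on_boundary
    (C : Set V) (hCcl : IsClosed C) (hCcv : Convex ℝ C)
    (hCcone : ∀ v ∈ C, ∀ t : ℝ, 0 ≤ t → t • v ∈ C)
    (hCproper : ∀ v ∈ C, -v ∈ C → v = 0)
    (hCfull : (interior C).Nonempty)
    (s : ℝ) (hs : 1 < s) (f : V → ℝ)
    (hfusc : UpperSemicontinuousOn f C)
    (hf0 : ∀ v ∈ C, 0 ≤ f v)
    (hfhom : ∀ t : ℝ, 0 ≤ t → ∀ v ∈ C, f (t • v) = t ^ s * f v)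
    (hfpos : ∀ v ∈ interior C, 0 < f v)
    (hfconc : ∀ v ∈ C, ∀ x ∈ C, f v ^ (1/s) + f x ^ (1/s) ≤ f (v + x) ^ (1/s))
    (α : ℝ) (hα : α ∈ Set.Ioo (0:ℝ) 1)
    (hsub : ∀ v ∈ frontier C, v ≠ 0 → ∀ x ∈ interior C,
      ∃ c > (0:ℝ), ∃ ε₀ > (0:ℝ), ∀ ε : ℝ, 0 < ε → ε ≤ ε₀ →
        c * ε ^ α ≤ f (v + ε • x) ^ (1/s)) :
    (∀ w ∈ frontier (dualCone C), polar C s f w = 0) ∧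
      Continuous ((dualCone C).indicator (polar C s f)) := by
  obtain ⟨hα0, hα1⟩ := hα
  have hs1 : (0:ℝ) < s - 1 := by linarith
  set p := s / (s - 1) with hpdef
  have hp : 0 < p := div_pos (by linarith) hs1
  set K := dualCone C with hKdef
  have hKcl : IsClosed K := aux_dualCone_closed C
  have hKcv : Convex ℝ K := aux_dualCone_convex C
  set g : (V →L[ℝ] ℝ) → ℝ := fun w => sInf ((fun v => w v / f v ^ (1/s)) '' interior C)
    with hgdef
  have hbase0 : ∀ w ∈ K, ∀ v ∈ interior C, 0 ≤ w v / f v ^ (1/s) := fun w hw v hv =>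
    div_nonneg (hw v (interior_subset hv)) (Real.rpow_nonneg (hf0 v (interior_subset hv)) _)
  have hSne : ∀ w : V →L[ℝ] ℝ, ((fun v => w v / f v ^ (1/s)) '' interior C).Nonempty :=
    fun w => hCfull.image _
  have hSbdd : ∀ w ∈ K, BddBelow ((fun v => w v / f v ^ (1/s)) '' interior C) := fun w hw =>
    ⟨0, by rintro x ⟨v, hv, rfl⟩; exact hbase0 w hw v hv⟩
  set h : ℝ → ℝ := fun x => max x 0 ^ p with hhdef
  have hhmono : Monotone h := fun x y hxy =>
    Real.rpow_le_rpow (le_max_right _ _) (max_le_max hxy le_rfl) hp.le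
  have hhcont : Continuous h := by
    apply continuous_iff_continuousAt.2
    intro x
    exact (Real.continuousAt_rpow_const _ p (Or.inr hp.le)).comp
      ((continuous_id.max continuous_const).continuousAt)
  have hpolar_eq : ∀ w ∈ K, polar C s f w = h (g w) := by
    intro w hw
    have himg : (fun v => (w v / f v ^ (1/s)) ^ p) '' interior C
        = h '' ((fun v => w v / f v ^ (1/s)) '' interior C) := by
      rw [image_image]
      apply image_congr
      intro v hv
      simp only [hhdef, max_eq_left (hbase0 w hw v hv)]
    show sInf ((fun v => (w v / f v ^ (1/s)) ^ p) '' interior C) = h (g w)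
    rw [himg]
    exact (hhmono.map_csInf_of_continuousAt hhcont.continuousAt (hSne w) (hSbdd w hw)).symm
  have hpolar0 : ∀ w ∈ K, 0 ≤ polar C s f w := fun w hw => by
    rw [hpolar_eq w hw]; exact Real.rpow_nonneg (le_max_right _ _) _
  have hpolar_le : ∀ w ∈ K, ∀ v ∈ interior C,
      polar C s f w ≤ (w v / f v ^ (1/s)) ^ p := by
    intro w hw v hv
    have hb : BddBelow ((fun v => (w v / f v ^ (1/s)) ^ p) '' interior C) :=
      ⟨0, by rintro x ⟨v', hv', rfl⟩; exact Real.rpow_nonneg (hbase0 w hw v' hv') _⟩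
    exact csInf_le hb ⟨v, hv, rfl⟩
  have hgconc : ConcaveOn ℝ K g := by
    refine ⟨hKcv, fun w1 h1 w2 h2 a b ha hb hab => ?_⟩
    refine le_csInf (hSne _) ?_
    rintro x ⟨v, hv, rfl⟩
    have g1 : g w1 ≤ w1 v / f v ^ (1/s) := csInf_le (hSbdd w1 h1) ⟨v, hv, rfl⟩
    have g2 : g w2 ≤ w2 v / f v ^ (1/s) := csInf_le (hSbdd w2 h2) ⟨v, hv, rfl⟩
    have e : (a • w1 + b • w2) v = a * w1 v + b * w2 v := by
      simp
    simp only [smul_eq_mul, e, add_div, mul_div_assoc]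
    have t1 := mul_le_mul_of_nonneg_left g1 ha
    have t2 := mul_le_mul_of_nonneg_left g2 hb
    linarith
  obtain ⟨x₀, hx₀⟩ := hCfull
  have hkey : ∀ w ∈ frontier K, ∀ η : ℝ, 0 < η →
      ∀ᶠ w' in 𝓝 w, w' ∈ K → polar C s f w' < η := by
    intro w hwf η hη
    have hwK : w ∈ K := by have := hwf.1; rwa [hKcl.closure_eq] at this
    obtain ⟨v₀, hv₀C, hv₀0, hv₀w⟩ := aux_frontier_dual hCcl hCcone hwK hwf.2
    by_cases hvint : v₀ ∈ interior C
    · have hcont : ContinuousAt (fun w' : V →L[ℝ] ℝ => (w' v₀ / f v₀ ^ (1/s)) ^ p) w := by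
        apply (Real.continuousAt_rpow_const _ p (Or.inr hp.le)).comp
        exact ((ContinuousLinearMap.apply ℝ ℝ v₀).continuous.div_const _).continuousAt
      have hval : (w v₀ / f v₀ ^ (1/s)) ^ p = 0 := by
        rw [hv₀w, zero_div, Real.zero_rpow hp.ne']
      have hev : ∀ᶠ w' in 𝓝 w, (w' v₀ / f v₀ ^ (1/s)) ^ p < η := by
        rw [ContinuousAt, hval] at hcont
        exact hcont.eventually_lt_const hη
      filter_upwards [hev] with w' hlt hw'K
      exact lt_of_le_of_lt (hpolar_le w' hw'K v₀ hvint) hlt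
    · have hv₀fr : v₀ ∈ frontier C := ⟨subset_closure hv₀C, hvint⟩
      obtain ⟨c, hc, ε₀, hε₀, hest⟩ := hsub v₀ hv₀fr hv₀0 x₀ hx₀
      have hA : 0 ≤ w x₀ := hwK x₀ (interior_subset hx₀)
      obtain ⟨ε, hε0, hεε₀, hεsmall⟩ : ∃ ε : ℝ, 0 < ε ∧ ε ≤ ε₀ ∧
          ((w v₀ + ε * w x₀) / (c * ε ^ α)) ^ p < η := by
        rcases eq_or_lt_of_le hA with hA0 | hA0
        · exact ⟨ε₀, hε₀, le_rfl, by
            rw [hv₀w, ← hA0, mul_zero, add_zero, zero_div, Real.zero_rpow hp.ne']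
            exact hη⟩
        · set B := η ^ (1/p) * c / w x₀ with hB
          have hηp : 0 < η ^ (1/p) := Real.rpow_pos_of_pos hη _
          have hBpos : 0 < B := by positivity
          have htd : Tendsto (fun ε : ℝ => ε ^ (1 - α)) (𝓝[>] (0:ℝ)) (𝓝 0) := by
            have hc0 : ContinuousAt (fun x : ℝ => x ^ (1 - α)) 0 :=
              Real.continuousAt_rpow_const 0 (1 - α) (Or.inr (by linarith))
            have h00 : (0:ℝ) ^ (1 - α) = 0 := Real.zero_rpow (by linarith : 1 - α ≠ 0)
            have := (hc0.continuousWithinAt (s := Ioi (0:ℝ)))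
            rwa [ContinuousWithinAt, h00] at this
          have hevB := htd.eventually_lt_const hBpos
          have hevε₀ : ∀ᶠ ε in 𝓝[>] (0:ℝ), ε ≤ ε₀ := by
            filter_upwards [Ioc_mem_nhdsGT hε₀] with ε hε
            exact hε.2
          have hev0 : ∀ᶠ ε in 𝓝[>] (0:ℝ), (0:ℝ) < ε :=
            eventually_mem_nhdsWithin.mono fun ε hε => hε
          obtain ⟨ε, h1, h2, h3⟩ := (hevB.and (hevε₀.and hev0)).exists
          refine ⟨ε, h3, h2, ?_⟩
          have he : (w v₀ + ε * w x₀) / (c * ε ^ α) = (w x₀ / c) * ε ^ (1 - α) := by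
            rw [hv₀w, zero_add, Real.rpow_sub h3, Real.rpow_one]
            field_simp
          rw [he]
          have hXB : (w x₀ / c) * B = η ^ (1/p) := by
            rw [hB]
            field_simp
          have hXlt : (w x₀ / c) * ε ^ (1 - α) < η ^ (1/p) := by
            have := mul_lt_mul_of_pos_left h1 (div_pos hA0 hc)
            rwa [hXB] at this
          have h0X : 0 ≤ (w x₀ / c) * ε ^ (1 - α) := by positivity
          have := Real.rpow_lt_rpow h0X hXlt hp
          rwa [← Real.rpow_mul hη.le, one_div_mul_cancel hp.ne', Real.rpow_one] at this
      set vε := v₀ + ε • x₀ with hvεdef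
      have hvεint : vε ∈ interior C :=
        aux_add_interior hCcv hCcone hv₀C (aux_smul_interior hCcone hε0 hx₀)
      have hfb : c * ε ^ α ≤ f vε ^ (1/s) := hest ε hε0 hεε₀
      have hcε : 0 < c * ε ^ α := by positivity
      have hG : ContinuousAt
          (fun w' : V →L[ℝ] ℝ => ((w' v₀ + ε * w' x₀) / (c * ε ^ α)) ^ p) w := by
        apply (Real.continuousAt_rpow_const _ p (Or.inr hp.le)).comp
        apply ContinuousAt.div_const
        exact ((ContinuousLinearMap.apply ℝ ℝ v₀).continuous.continuousAt.add
          (((ContinuousLinearMap.apply ℝ ℝ x₀).continuous.continuousAt).const_mul ε))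
      have hev : ∀ᶠ w' in 𝓝 w, ((w' v₀ + ε * w' x₀) / (c * ε ^ α)) ^ p < η := by
        rw [ContinuousAt] at hG
        exact hG.eventually_lt_const hεsmall
      filter_upwards [hev] with w' hlt hw'K
      have h1 : polar C s f w' ≤ (w' vε / f vε ^ (1/s)) ^ p := hpolar_le w' hw'K vε hvεint
      have h2 : w' vε = w' v₀ + ε * w' x₀ := by rw [hvεdef, map_add, map_smul, smul_eq_mul]
      have h3 : (w' vε / f vε ^ (1/s)) ^ p ≤ ((w' v₀ + ε * w' x₀) / (c * ε ^ α)) ^ p := by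
        apply Real.rpow_le_rpow _ _ hp.le
        · exact div_nonneg (hw'K vε (interior_subset hvεint))
            (Real.rpow_nonneg (hf0 _ (interior_subset hvεint)) _)
        · rw [← h2]
          gcongr
          exact hw'K vε (interior_subset hvεint)
      linarith
  have hpart1 : ∀ w ∈ frontier K, polar C s f w = 0 := by
    intro w hwf
    have hwK : w ∈ K := by have := hwf.1; rwa [hKcl.closure_eq] at this
    refine le_antisymm ?_ (hpolar0 w hwK)
    by_contra hcon
    push_neg at hcon
    exact lt_irrefl _ ((hkey w hwf _ hcon).self_of_nhds hwK)
  refine ⟨hpart1, ?_⟩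
  rw [continuous_iff_continuousAt]
  intro w
  by_cases hwK : w ∈ K
  · by_cases hwint : w ∈ interior K
    · have hgc : ContinuousAt g w :=
        (hgconc.continuousOn_interior).continuousAt (isOpen_interior.mem_nhds hwint)
      have hc : ContinuousAt (fun w' => h (g w')) w := hhcont.continuousAt.comp hgc
      apply hc.congr
      filter_upwards [isOpen_interior.mem_nhds hwint] with w' hw'
      rw [indicator_of_mem (interior_subset hw' : w' ∈ K) (polar C s f),
        hpolar_eq w' (interior_subset hw')]
    · have hwf : w ∈ frontier K := ⟨subset_closure hwK, hwint⟩
      have hiw : (dualCone C).indicator (polar C s f) w = 0 := by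
        rw [indicator_of_mem hwK (polar C s f), hpart1 w hwf]
      rw [ContinuousAt, hiw, Metric.tendsto_nhds]
      intro η hη
      filter_upwards [hkey w hwf η hη] with w' hlt
      rw [Real.dist_eq, sub_zero]
      by_cases hw'K : w' ∈ K
      · rw [indicator_of_mem hw'K (polar C s f), abs_of_nonneg (hpolar0 w' hw'K)]
        exact hlt hw'K
      · rw [indicator_of_notMem hw'K (polar C s f)]
        simpa using hη
  · have hop : IsOpen (Kᶜ) := hKcl.isOpen_compl
    have hev : ∀ᶠ w' in 𝓝 w, (dualCone C).indicator (polar C s f) w' = 0 := by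
      filter_upwards [hop.mem_nhds hwK] with w' hw'
      exact indicator_of_notMem hw' (polar C s f)
    exact continuousAt_const.congr (EventuallyEq.symm hev)
end

section
/- Let C ⊂ V be a proper closed convex full-dimensional cone, s > 1, and f ∈ HConc_s(C) continuously differentiable on C°. Define D(v) = Df(v)/s ∈ V* for v ∈ C°. Let C_T ⊂ C° be a nonempty subcone. If the restriction of f to C_T is strictly log concave (i.e., f(v+x)^{1/s} > f(v)^{1/s} + f(x)^{1/s} whenever v, x ∈ C_T are not proportional), then f satisfies Teissier proportionality on C_T: whenever v, x ∈ C_T satisfy D(v)·x = f(v)^{(s-1)/s} f(x)^{1/s}, the vectors v and x are proportional. -/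
open Set Topology

variable {V : Type*} [NormedAddCommGroup V] [NormedSpace ℝ V] [FiniteDimensional ℝ V]

/-!
Write `g = f ^ (1/s)`. Superadditivity and homogeneity of weight one make `g` concave on `C`,
so `g` lies below its tangent planes: `g (v + x) ≤ g v + Dg(v) x`. Since
`Dg(v) = f(v)^(1/s - 1) D(v)`, equality in the Khovanskii–Teissier inequality says exactly
`Dg(v) x = g x`, hence `g (v + x) ≤ g v + g x`, which strict log concavity forbids unless
`v` and `x` are proportional.
-/

section ConvexCone

variable {E : Type*} [AddCommGroup E] [Module ℝ E] {C : Set E}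

theorem Convex.add_mem_of_smul_mem (hC : Convex ℝ C)
    (hcone : ∀ v ∈ C, ∀ t : ℝ, 0 ≤ t → t • v ∈ C) {a b : E} (ha : a ∈ C) (hb : b ∈ C) :
    a + b ∈ C := by
  have hmid : (1/2 : ℝ) • a + (1/2 : ℝ) • b ∈ C :=
    hC ha hb (by norm_num) (by norm_num) (by norm_num)
  convert hcone _ hmid 2 zero_le_two using 1
  rw [smul_add, smul_smul, smul_smul]
  norm_num

theorem concaveOn_of_superadditive_of_homogeneous (hC : Convex ℝ C)
    (hcone : ∀ v ∈ C, ∀ t : ℝ, 0 ≤ t → t • v ∈ C) {g : E → ℝ}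
    (hhom : ∀ t : ℝ, 0 ≤ t → ∀ v ∈ C, g (t • v) = t * g v)
    (hsup : ∀ v ∈ C, ∀ x ∈ C, g v + g x ≤ g (v + x)) :
    ConcaveOn ℝ C g := by
  refine ⟨hC, fun a ha b hb p q hp hq _ => ?_⟩
  rw [smul_eq_mul, smul_eq_mul, ← hhom p hp a ha, ← hhom q hq b hb]
  exact hsup _ (hcone a ha p hp) _ (hcone b hb q hq)

end ConvexCone

theorem Real.rpow_mul_rpow_one_div {t y : ℝ} (ht : 0 ≤ t) (hy : 0 ≤ y) {s : ℝ} (hs : s ≠ 0) :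
    (t ^ s * y) ^ (1/s) = t * y ^ (1/s) := by
  rw [Real.mul_rpow (Real.rpow_nonneg ht s) hy, ← Real.rpow_mul ht, mul_one_div_cancel hs,
    Real.rpow_one]

theorem ConcaveOn.le_add_fderiv_sub {E : Type*} [NormedAddCommGroup E] [NormedSpace ℝ E]
    {C : Set E} {g : E → ℝ} {g' : E →L[ℝ] ℝ} {x y : E}
    (hg : ConcaveOn ℝ C g) (hx : x ∈ C) (hy : y ∈ C) (hg' : HasFDerivAt g g' x) :
    g y ≤ g x + g' (y - x) := by
  set line : ℝ →ᵃ[ℝ] E := AffineMap.lineMap x y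
  have hline : ConcaveOn ℝ (line ⁻¹' C) (g ∘ line) := hg.comp_affineMap line
  have h0 : line 0 = x := AffineMap.lineMap_apply_zero x y
  have h1 : line 1 = y := AffineMap.lineMap_apply_one x y
  have hderiv : HasDerivAt (g ∘ line) (g' (y - x)) 0 :=
    (h0 ▸ hg').comp_hasDerivAt 0 AffineMap.hasDerivAt_lineMap
  have hslope := hline.slope_le_of_hasDerivAt (by simpa [h0] using hx) (by simpa [h1] using hy)
    zero_lt_one hderiv
  rw [slope_def_field, Function.comp_apply, Function.comp_apply, h0, h1] at hslope
  linarith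

theorem strict_log_concave_implies_teissier_general
    (C : Set V) (hCcv : Convex ℝ C)
    (hCcone : ∀ v ∈ C, ∀ t : ℝ, 0 ≤ t → t • v ∈ C)
    (s : ℝ) (hs : 1 < s) (f : V → ℝ)
    (hf0 : ∀ v ∈ C, 0 ≤ f v)
    (hfhom : ∀ t : ℝ, 0 ≤ t → ∀ v ∈ C, f (t • v) = t ^ s * f v)
    (hfpos : ∀ v ∈ interior C, 0 < f v)
    (hfconc : ∀ v ∈ C, ∀ x ∈ C, f v ^ (1/s) + f x ^ (1/s) ≤ f (v + x) ^ (1/s))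
    (hfC1 : ContDiffOn ℝ 1 f (interior C))
    (T : Set V) (hTsub : T ⊆ interior C)
    (hslc : ∀ v ∈ T, ∀ x ∈ T, (¬ ∃ t : ℝ, x = t • v) →
      f v ^ (1/s) + f x ^ (1/s) < f (v + x) ^ (1/s)) :
    ∀ v ∈ T, ∀ x ∈ T,
      fderiv ℝ f v x / s = f v ^ ((s-1)/s) * f x ^ (1/s) → ∃ t : ℝ, x = t • v := by
  intro v hv x hx heq
  by_contra hprop
  have hs0 : s ≠ 0 := by linarith
  have hvC : v ∈ C := interior_subset (hTsub hv)
  have hfv : 0 < f v := hfpos v (hTsub hv)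
  have hconc : ConcaveOn ℝ C (fun w => f w ^ (1/s)) :=
    concaveOn_of_superadditive_of_homogeneous hCcv hCcone
      (fun t ht w hw => by rw [hfhom t ht w hw, Real.rpow_mul_rpow_one_div ht (hf0 w hw) hs0])
      hfconc
  have hdf : HasFDerivAt f (fderiv ℝ f v) v :=
    ((hfC1.contDiffAt (isOpen_interior.mem_nhds (hTsub hv))).differentiableAt
      one_ne_zero).hasFDerivAt
  have htangent := hconc.le_add_fderiv_sub hvC
    (hCcv.add_mem_of_smul_mem hCcone hvC (interior_subset (hTsub hx)))
    (hdf.rpow_const (p := 1/s) (Or.inl hfv.ne'))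
  have hslope : (1/s * f v ^ (1/s - 1)) * fderiv ℝ f v x = f x ^ (1/s) := by
    have hexp : f v ^ (1/s - 1) * f v ^ ((s-1)/s) = 1 := by
      rw [← Real.rpow_add hfv, show 1/s - 1 + (s-1)/s = 0 by field_simp; ring, Real.rpow_zero]
    rw [div_eq_iff hs0] at heq
    rw [heq]
    linear_combination f x ^ (1/s) * hexp +
      f v ^ (1/s - 1) * f v ^ ((s-1)/s) * f x ^ (1/s) * one_div_mul_cancel hs0
  simp only [add_sub_cancel_left, FunLike.coe_smul, Pi.smul_apply, smul_eq_mul] at htangent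
  linarith [hslc v hv x hx hprop]

theorem strict_log_concave_implies_teissier
    (C : Set V) (hCcl : IsClosed C) (hCcv : Convex ℝ C)
    (hCcone : ∀ v ∈ C, ∀ t : ℝ, 0 ≤ t → t • v ∈ C)
    (hCproper : ∀ v ∈ C, -v ∈ C → v = 0)
    (hCfull : (interior C).Nonempty)
    (s : ℝ) (hs : 1 < s) (f : V → ℝ)
    (hfusc : UpperSemicontinuousOn f C)
    (hf0 : ∀ v ∈ C, 0 ≤ f v)
    (hfhom : ∀ t : ℝ, 0 ≤ t → ∀ v ∈ C, f (t • v) = t ^ s * f v)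
    (hfpos : ∀ v ∈ interior C, 0 < f v)
    (hfconc : ∀ v ∈ C, ∀ x ∈ C, f v ^ (1/s) + f x ^ (1/s) ≤ f (v + x) ^ (1/s))
    (hfC1 : ContDiffOn ℝ 1 f (interior C))
    (T : Set V) (hTsub : T ⊆ interior C) (hTne : T.Nonempty)
    (hTcone : ∀ v ∈ T, ∀ t : ℝ, 0 < t → t • v ∈ T)
    (hslc : ∀ v ∈ T, ∀ x ∈ T, (¬ ∃ t : ℝ, x = t • v) →
      f v ^ (1/s) + f x ^ (1/s) < f (v + x) ^ (1/s)) :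
    ∀ v ∈ T, ∀ x ∈ T,
      fderiv ℝ f v x / s = f v ^ ((s-1)/s) * f x ^ (1/s) → ∃ t : ℝ, x = t • v :=
  strict_log_concave_implies_teissier_general C hCcv hCcone s hs f hf0 hfhom hfpos hfconc hfC1 T
    hTsub hslc
end

section
/- Let C ⊂ V be a proper closed convex full-dimensional cone, s > 1, and f ∈ HConc_s(C) continuously differentiable on C°, with D(v) = Df(v)/s. Let C_T ⊂ C° be a nonempty subcone. If f satisfies Teissier proportionality on C_T (equality D(v)·x = f(v)^{(s-1)/s} f(x)^{1/s} for v, x ∈ C_T implies v, x proportional), then the restriction of D to C_T is injective. -/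
open Set Topology

variable {V : Type*} [NormedAddCommGroup V] [NormedSpace ℝ V] [FiniteDimensional ℝ V]

/-!
`D(v)` satisfies Euler's relation `D(v)·v = f(v)` and, since `f^{1/s}` is superadditive and
`1`-homogeneous, the gradient inequality `f(v)^{(s-1)/s} f(x)^{1/s} ≤ D(v)·x`. If `D(v) = D(w)`,
these give `f(v) = D(w)·v ≥ f(w)^{(s-1)/s} f(v)^{1/s}`, hence `f(v) ≥ f(w)`, and symmetrically, so
`f(v) = f(w)` and the gradient inequality at `(w, v)` is an equality. Teissier proportionality
then gives `v = t w`, and Euler's relation forces `t = 1`.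
-/

theorem rpow_mul_rpow_of_add_eq_one {a p q : ℝ} (ha : 0 < a) (hpq : p + q = 1) :
    a ^ q * a ^ p = a := by
  rw [← Real.rpow_add ha, add_comm, hpq, Real.rpow_one]

theorem le_of_rpow_mul_rpow_le {a b p q : ℝ} (ha : 0 < a) (hb : 0 ≤ b) (hq : 0 < q)
    (hpq : p + q = 1) (h : b ^ q * a ^ p ≤ a) : b ≤ a := by
  nth_rewrite 2 [← rpow_mul_rpow_of_add_eq_one ha hpq] at h
  exact (Real.rpow_le_rpow_iff hb ha.le hq).mp
    (le_of_mul_le_mul_right h (Real.rpow_pos_of_pos ha p))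

section Calculus

variable {E : Type*} [NormedAddCommGroup E] [NormedSpace ℝ E] {f : E → ℝ} {v : E}

theorem fderiv_apply_self_of_homogeneous {s : ℝ} (hf : DifferentiableAt ℝ f v)
    (hhom : ∀ t : ℝ, 0 < t → f (t • v) = t ^ s * f v) :
    fderiv ℝ f v v = s * f v := by
  have hray : HasDerivAt (fun t : ℝ => f (t • v)) (fderiv ℝ f v v) 1 := by
    refine HasFDerivAt.comp_hasDerivAt (f := fun t : ℝ => t • v) 1 ?_ ?_
    · simpa using hf.hasFDerivAt
    · simpa using (hasDerivAt_id (1 : ℝ)).smul_const v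
  have hpow : HasDerivAt (fun t : ℝ => t ^ s * f v) (s * f v) 1 := by
    simpa using (Real.hasDerivAt_rpow_const (Or.inl one_ne_zero)).mul_const (f v)
  refine hray.unique (hpow.congr_of_eventuallyEq ?_)
  filter_upwards [eventually_gt_nhds one_pos] with t ht using hhom t ht

theorem HasFDerivAt.le_apply_of_add_mul_le {f' : E →L[ℝ] ℝ} {x : E} {c : ℝ}
    (hf : HasFDerivAt f f' v) (h : ∀ ε : ℝ, 0 < ε → f v + ε * c ≤ f (v + ε • x)) :
    c ≤ f' x := by
  have hray : HasDerivAt (fun ε : ℝ => f (v + ε • x)) (f' x) 0 := by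
    refine HasFDerivAt.comp_hasDerivAt (f := fun ε : ℝ => v + ε • x) 0 ?_ ?_
    · simpa using hf
    · simpa using ((hasDerivAt_id (0 : ℝ)).smul_const x).const_add v
  refine ge_of_tendsto hray.tendsto_slope_zero_right ?_
  filter_upwards [self_mem_nhdsWithin] with ε (hε : 0 < ε)
  rw [smul_eq_mul, zero_add, zero_smul, add_zero, le_inv_mul_iff₀ hε]
  linarith [h ε hε]

theorem rpow_mul_rpow_le_fderiv_apply_div {C : Set E} {s : ℝ}
    (hCcone : ∀ v ∈ C, ∀ t : ℝ, 0 ≤ t → t • v ∈ C) (hs : s ≠ 0)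
    (hf0 : ∀ v ∈ C, 0 ≤ f v)
    (hfhom : ∀ t : ℝ, 0 ≤ t → ∀ v ∈ C, f (t • v) = t ^ s * f v)
    (hfconc : ∀ v ∈ C, ∀ x ∈ C, f v ^ (1/s) + f x ^ (1/s) ≤ f (v + x) ^ (1/s))
    {x : E} (hv : v ∈ C) (hfv : 0 < f v) (hdf : DifferentiableAt ℝ f v) (hx : x ∈ C) :
    f v ^ ((s-1)/s) * f x ^ (1/s) ≤ fderiv ℝ f v x / s := by
  have hroot : ∀ ε : ℝ, 0 < ε → f v ^ (1/s) + ε * f x ^ (1/s) ≤ f (v + ε • x) ^ (1/s) := by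
    intro ε hε
    calc f v ^ (1/s) + ε * f x ^ (1/s) = f v ^ (1/s) + f (ε • x) ^ (1/s) := by
          rw [hfhom ε hε.le x hx, Real.mul_rpow (by positivity) (hf0 x hx),
            ← Real.rpow_mul hε.le, mul_one_div_cancel hs, Real.rpow_one]
      _ ≤ f (v + ε • x) ^ (1/s) := hfconc v hv _ (hCcone x hx ε hε.le)
  have hderiv := (hdf.hasFDerivAt.rpow_const (p := 1/s) (Or.inl hfv.ne')).le_apply_of_add_mul_le
    hroot
  rw [smul_apply, smul_eq_mul] at hderiv
  have hcancel : f v ^ ((s-1)/s) * f v ^ (1/s - 1) = 1 := by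
    rw [← Real.rpow_add hfv, show (s-1)/s + (1/s - 1) = 0 by field_simp; ring, Real.rpow_zero]
  calc f v ^ ((s-1)/s) * f x ^ (1/s)
      ≤ f v ^ ((s-1)/s) * (1/s * f v ^ (1/s - 1) * fderiv ℝ f v x) := by gcongr
    _ = fderiv ℝ f v x / s := by linear_combination (fderiv ℝ f v x / s) * hcancel

end Calculus

theorem teissier_implies_injective_general
    (C : Set V)
    (hCcone : ∀ v ∈ C, ∀ t : ℝ, 0 ≤ t → t • v ∈ C)
    (s : ℝ) (hs : 1 < s) (f : V → ℝ)
    (hf0 : ∀ v ∈ C, 0 ≤ f v)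
    (hfhom : ∀ t : ℝ, 0 ≤ t → ∀ v ∈ C, f (t • v) = t ^ s * f v)
    (hfpos : ∀ v ∈ interior C, 0 < f v)
    (hfconc : ∀ v ∈ C, ∀ x ∈ C, f v ^ (1/s) + f x ^ (1/s) ≤ f (v + x) ^ (1/s))
    (hfC1 : ContDiffOn ℝ 1 f (interior C))
    (T : Set V) (hTsub : T ⊆ interior C)
    (hteissier : ∀ v ∈ T, ∀ x ∈ T,
      fderiv ℝ f v x / s = f v ^ ((s-1)/s) * f x ^ (1/s) → ∃ t : ℝ, x = t • v) :
    Set.InjOn (fun v => (s⁻¹ • fderiv ℝ f v : V →L[ℝ] ℝ)) T := by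
  have hs0 : s ≠ 0 := (zero_lt_one.trans hs).ne'
  have hexp : 1/s + (s-1)/s = 1 := by field_simp; ring
  have hexp_pos : 0 < (s-1)/s := div_pos (by linarith) (by linarith)
  have hC : ∀ v ∈ T, v ∈ C := fun v hv => interior_subset (hTsub hv)
  have hpos : ∀ v ∈ T, 0 < f v := fun v hv => hfpos v (hTsub hv)
  have hdiff : ∀ v ∈ T, DifferentiableAt ℝ f v := fun v hv =>
    (hfC1.contDiffAt (isOpen_interior.mem_nhds (hTsub hv))).differentiableAt one_ne_zero
  have heuler : ∀ v ∈ T, fderiv ℝ f v v = s * f v := fun v hv =>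
    fderiv_apply_self_of_homogeneous (hdiff v hv) fun t ht => hfhom t ht.le v (hC v hv)
  have hgrad : ∀ v ∈ T, ∀ x ∈ T, f v ^ ((s-1)/s) * f x ^ (1/s) ≤ fderiv ℝ f v x / s :=
    fun v hv x hx => rpow_mul_rpow_le_fderiv_apply_div hCcone hs0 hf0 hfhom hfconc (hC v hv)
      (hpos v hv) (hdiff v hv) (hC x hx)
  intro v hv w hw hD
  replace hD : fderiv ℝ f v = fderiv ℝ f w := smul_right_injective _ (inv_ne_zero hs0) hD
  have hwv : fderiv ℝ f w v / s = f v := by rw [← hD, heuler v hv]; field_simp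
  have hvw : fderiv ℝ f v w / s = f w := by rw [hD, heuler w hw]; field_simp
  have hfeq : f v = f w := le_antisymm
    (le_of_rpow_mul_rpow_le (hpos w hw) (hpos v hv).le hexp_pos hexp (hvw ▸ hgrad v hv w hw))
    (le_of_rpow_mul_rpow_le (hpos v hv) (hpos w hw).le hexp_pos hexp (hwv ▸ hgrad w hw v hv))
  obtain ⟨t, rfl⟩ := hteissier w hw _ hv
    (by rw [hwv, ← hfeq, rpow_mul_rpow_of_add_eq_one (hpos _ hv) hexp])
  have ht : t * f w = f w := by
    rwa [map_smul, smul_eq_mul, heuler w hw, hfeq, mul_div_assoc, mul_div_cancel_left₀ _ hs0]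
      at hwv
  rw [(mul_eq_right₀ (hpos w hw).ne').mp ht, one_smul]

theorem teissier_implies_injective
    (C : Set V) (hCcl : IsClosed C) (hCcv : Convex ℝ C)
    (hCcone : ∀ v ∈ C, ∀ t : ℝ, 0 ≤ t → t • v ∈ C)
    (hCproper : ∀ v ∈ C, -v ∈ C → v = 0)
    (hCfull : (interior C).Nonempty)
    (s : ℝ) (hs : 1 < s) (f : V → ℝ)
    (hfusc : UpperSemicontinuousOn f C)
    (hf0 : ∀ v ∈ C, 0 ≤ f v)
    (hfhom : ∀ t : ℝ, 0 ≤ t → ∀ v ∈ C, f (t • v) = t ^ s * f v)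
    (hfpos : ∀ v ∈ interior C, 0 < f v)
    (hfconc : ∀ v ∈ C, ∀ x ∈ C, f v ^ (1/s) + f x ^ (1/s) ≤ f (v + x) ^ (1/s))
    (hfC1 : ContDiffOn ℝ 1 f (interior C))
    (T : Set V) (hTsub : T ⊆ interior C) (hTne : T.Nonempty)
    (hTcone : ∀ v ∈ T, ∀ t : ℝ, 0 < t → t • v ∈ T)
    (hteissier : ∀ v ∈ T, ∀ x ∈ T,
      fderiv ℝ f v x / s = f v ^ ((s-1)/s) * f x ^ (1/s) → ∃ t : ℝ, x = t • v) :
    Set.InjOn (fun v => (s⁻¹ • fderiv ℝ f v : V →L[ℝ] ℝ)) T :=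
  teissier_implies_injective_general C hCcone s hs f hf0 hfhom hfpos hfconc hfC1 T hTsub hteissier
end

section
/- Let C ⊂ V be a proper closed convex full-dimensional cone, s > 1, and f ∈ HConc_s(C) continuously differentiable on C°, with D(v) = Df(v)/s. Let C_T ⊂ C° be a nonempty convex subcone. If f satisfies Teissier proportionality on C_T, then f is strictly log concave on C_T: for any non-proportional v, x ∈ C_T, f(v+x)^{1/s} > f(v)^{1/s} + f(x)^{1/s}. -/
/-!
Write `F = f ^ (1/s)`; it is superadditive and positively homogeneous of degree one. If
`F v + F x = F (v + x)`, then comparing `F (v + x + t • x)` with `F (v + x) + F (t • x)` from below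
and with `F ((1 + t) • (v + x)) - F (t • v)` from above shows that `F` is affine on the ray
`t ↦ v + x + t • x`, `t ≥ 0`. Differentiating at `t = 0` turns this into the Teissier equality
`D(v + x) · x = f(v + x)^((s-1)/s) f(x)^(1/s)`, so `x` is proportional to `v + x`, hence to `v`.
-/

open Set Topology

variable {V : Type*} [NormedAddCommGroup V] [NormedSpace ℝ V] [FiniteDimensional ℝ V]

theorem Convex.add_mem_of_smul_mem_s11 {𝕜 E : Type*} [Field 𝕜] [LinearOrder 𝕜] [IsStrictOrderedRing 𝕜]
    [AddCommGroup E] [Module 𝕜 E] {T : Set E} (hT : Convex 𝕜 T)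
    (hsmul : ∀ v ∈ T, ∀ t : 𝕜, 0 < t → t • v ∈ T) {v x : E} (hv : v ∈ T) (hx : x ∈ T) :
    v + x ∈ T := by
  have hmid := hT hv hx (by norm_num : (0 : 𝕜) ≤ 1 / 2) (by norm_num : (0 : 𝕜) ≤ 1 / 2)
    (by norm_num)
  convert hsmul _ hmid 2 two_pos using 1
  module

theorem exists_eq_smul_of_eq_smul_add {K E : Type*} [Field K] [AddCommGroup E] [Module K E]
    {v x : E} {t : K} (hv : v ≠ 0) (h : x = t • (v + x)) : ∃ r : K, x = r • v := by
  have ht : 1 - t ≠ 0 := by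
    rintro ht
    rw [← sub_eq_zero.mp ht, one_smul, right_eq_add] at h
    exact hv h
  refine ⟨(1 - t)⁻¹ * t, ?_⟩
  have hx : (1 - t) • x = t • v := by
    rw [sub_smul, one_smul, sub_eq_iff_eq_add, ← smul_add, ← h]
  rw [mul_smul, ← hx, smul_smul, inv_mul_cancel₀ ht, one_smul]

theorem add_add_smul_eq_of_superadditive_of_eq {E : Type*} [AddCommGroup E] [Module ℝ E]
    {F : E → ℝ} {T : Set E}
    (hadd : ∀ a ∈ T, ∀ b ∈ T, a + b ∈ T) (hsmul : ∀ v ∈ T, ∀ t : ℝ, 0 < t → t • v ∈ T)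
    (hhom : ∀ t : ℝ, 0 < t → ∀ u ∈ T, F (t • u) = t * F u)
    (hsup : ∀ a ∈ T, ∀ b ∈ T, F a + F b ≤ F (a + b))
    {v x : E} (hv : v ∈ T) (hx : x ∈ T) (heq : F v + F x = F (v + x))
    {t : ℝ} (ht : 0 < t) :
    F (v + x + t • x) = F (v + x) + t * F x := by
  have hvx := hadd v hv x hx
  have htx := hsmul x hx t ht
  have hlower := hsup _ hvx _ htx
  have hupper := hsup _ (hadd _ hvx _ htx) _ (hsmul v hv t ht)
  have hcomb : v + x + t • x + t • v = (1 + t) • (v + x) := by module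
  rw [hhom t ht x hx] at hlower
  rw [hcomb, hhom _ (by linarith) _ hvx, hhom t ht v hv, ← heq] at hupper
  rw [← heq] at hlower ⊢
  linarith

theorem hasDerivAt_rpow_comp_add_smul {E : Type*} [NormedAddCommGroup E] [NormedSpace ℝ E]
    {f : E → ℝ} {w : E} (hf : DifferentiableAt ℝ f w) (hfw : 0 < f w) (x : E) (r : ℝ) :
    HasDerivAt (fun t : ℝ => f (w + t • x) ^ r) (r * f w ^ (r - 1) * fderiv ℝ f w x) 0 := by
  have hline : HasDerivAt (fun t : ℝ => w + t • x) x 0 := by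
    simpa using ((hasDerivAt_id (0 : ℝ)).smul_const x).const_add w
  have hf0 : HasFDerivAt f (fderiv ℝ f w) (w + (0 : ℝ) • x) := by
    simpa using hf.hasFDerivAt
  have hrpow : HasDerivAt (fun y : ℝ => y ^ r) (r * f w ^ (r - 1)) (f (w + (0 : ℝ) • x)) := by
    simpa using Real.hasDerivAt_rpow_const (p := r) (Or.inl hfw.ne')
  exact hrpow.comp 0 (hf0.comp_hasDerivAt 0 hline)

theorem HasDerivAt.eq_of_eq_affine_of_pos {g : ℝ → ℝ} {d c : ℝ} (hg : HasDerivAt g d 0)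
    (haff : ∀ t, 0 < t → g t = g 0 + t * c) : d = c := by
  have hline : HasDerivWithinAt g c (Ioi 0) 0 := by
    have hl : HasDerivAt (fun t : ℝ => g 0 + t * c) c 0 := by
      simpa using ((hasDerivAt_id (0 : ℝ)).mul_const c).const_add (g 0)
    exact hl.hasDerivWithinAt.congr haff (by simp)
  exact (uniqueDiffWithinAt_Ioi 0).eq_deriv _ hg.hasDerivWithinAt hline

theorem Real.div_eq_rpow_mul_of_one_div_mul_rpow_mul_eq {a d b s : ℝ} (ha : 0 < a) (hs : s ≠ 0)
    (h : 1/s * a ^ (1/s - 1) * d = b) : d / s = a ^ ((s-1)/s) * b :=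
  calc d / s = a ^ ((s-1)/s) * a ^ (1/s - 1) * (d / s) := by
        rw [← Real.rpow_add ha, show (s-1)/s + (1/s - 1) = 0 by field_simp; ring,
          Real.rpow_zero, one_mul]
    _ = a ^ ((s-1)/s) * b := by rw [← h]; ring

theorem teissier_implies_strict_log_concave_general
    (C : Set V)
    (s : ℝ) (hs : 1 < s) (f : V → ℝ)
    (hfhom : ∀ t : ℝ, 0 ≤ t → ∀ v ∈ C, f (t • v) = t ^ s * f v)
    (hfpos : ∀ v ∈ interior C, 0 < f v)
    (hfconc : ∀ v ∈ C, ∀ x ∈ C, f v ^ (1/s) + f x ^ (1/s) ≤ f (v + x) ^ (1/s))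
    (hfC1 : ContDiffOn ℝ 1 f (interior C))
    (T : Set V) (hTsub : T ⊆ interior C)
    (hTcone : ∀ v ∈ T, ∀ t : ℝ, 0 < t → t • v ∈ T)
    (hTconv : Convex ℝ T)
    (hteissier : ∀ v ∈ T, ∀ x ∈ T,
      fderiv ℝ f v x / s = f v ^ ((s-1)/s) * f x ^ (1/s) → ∃ t : ℝ, x = t • v) :
    ∀ v ∈ T, ∀ x ∈ T, (¬ ∃ t : ℝ, x = t • v) →
      f v ^ (1/s) + f x ^ (1/s) < f (v + x) ^ (1/s) := by
  intro v hv x hx hprop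
  have hs0 : s ≠ 0 := by positivity
  have hTC : T ⊆ C := hTsub.trans interior_subset
  have hTadd : ∀ a ∈ T, ∀ b ∈ T, a + b ∈ T := fun a ha b hb =>
    hTconv.add_mem_of_smul_mem_s11 hTcone ha hb
  refine (hfconc v (hTC hv) x (hTC hx)).lt_of_ne fun heq => hprop ?_
  set w := v + x
  have hwT : w ∈ T := hTadd v hv x hx
  have hfw : 0 < f w := hfpos w (hTsub hwT)
  have haff : ∀ t : ℝ, 0 < t → f (w + t • x) ^ (1/s) = f w ^ (1/s) + t * f x ^ (1/s) :=
    fun t ht => add_add_smul_eq_of_superadditive_of_eq (F := fun u => f u ^ (1/s)) hTadd hTcone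
      (fun t ht u hu => by
        rw [hfhom t ht.le u (hTC hu), Real.mul_rpow (by positivity) (hfpos u (hTsub hu)).le,
          one_div, Real.rpow_rpow_inv ht.le hs0])
      (fun a ha b hb => hfconc a (hTC ha) b (hTC hb)) hv hx heq ht
  have hderiv : 1/s * f w ^ (1/s - 1) * fderiv ℝ f w x = f x ^ (1/s) := by
    have hdiff : DifferentiableAt ℝ f w :=
      (hfC1.differentiableOn one_ne_zero).differentiableAt (isOpen_interior.mem_nhds (hTsub hwT))
    refine (hasDerivAt_rpow_comp_add_smul hdiff hfw x (1/s)).eq_of_eq_affine_of_pos fun t ht => ?_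
    simpa using haff t ht
  have hD : fderiv ℝ f w x / s = f w ^ ((s-1)/s) * f x ^ (1/s) :=
    Real.div_eq_rpow_mul_of_one_div_mul_rpow_mul_eq hfw hs0 hderiv
  have hv0 : v ≠ 0 := by
    rintro rfl
    have h0 := hfhom 0 le_rfl 0 (hTC hv)
    rw [smul_zero, Real.zero_rpow hs0, zero_mul] at h0
    exact (hfpos 0 (hTsub hv)).ne' h0
  obtain ⟨t, hxt⟩ := hteissier w hwT x hx hD
  exact exists_eq_smul_of_eq_smul_add hv0 hxt

theorem teissier_implies_strict_log_concave
    (C : Set V) (hCcl : IsClosed C) (hCcv : Convex ℝ C)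
    (hCcone : ∀ v ∈ C, ∀ t : ℝ, 0 ≤ t → t • v ∈ C)
    (hCproper : ∀ v ∈ C, -v ∈ C → v = 0)
    (hCfull : (interior C).Nonempty)
    (s : ℝ) (hs : 1 < s) (f : V → ℝ)
    (hfusc : UpperSemicontinuousOn f C)
    (hf0 : ∀ v ∈ C, 0 ≤ f v)
    (hfhom : ∀ t : ℝ, 0 ≤ t → ∀ v ∈ C, f (t • v) = t ^ s * f v)
    (hfpos : ∀ v ∈ interior C, 0 < f v)
    (hfconc : ∀ v ∈ C, ∀ x ∈ C, f v ^ (1/s) + f x ^ (1/s) ≤ f (v + x) ^ (1/s))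
    (hfC1 : ContDiffOn ℝ 1 f (interior C))
    (T : Set V) (hTsub : T ⊆ interior C) (hTne : T.Nonempty)
    (hTcone : ∀ v ∈ T, ∀ t : ℝ, 0 < t → t • v ∈ T)
    (hTconv : Convex ℝ T)
    (hteissier : ∀ v ∈ T, ∀ x ∈ T,
      fderiv ℝ f v x / s = f v ^ ((s-1)/s) * f x ^ (1/s) → ∃ t : ℝ, x = t • v) :
    ∀ v ∈ T, ∀ x ∈ T, (¬ ∃ t : ℝ, x = t • v) →
      f v ^ (1/s) + f x ^ (1/s) < f (v + x) ^ (1/s) :=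
  teissier_implies_strict_log_concave_general C s hs f hfhom hfpos hfconc hfC1 T hTsub hTcone hTconv
    hteissier
end
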